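/- arXiv:2003.03907 — 4 statements merged into one kernel-verified Lean document; each statement's English description precedes it below -/
import Mathlib

section
/- Bialternant formula for one-row shapes: for λ = (k) a single row and n variables, g_{(k)}(x_1,…,x_n) = h_k(x_1,…,x_n) = det[h_{λ_i + n - i}(1^{i-1}, x_j)] / ∏_{i<j}(x_i - x_j) where λ = (k, 0, …, 0); i.e., det of the n×n matrix with (i,j) entry h_{λ_i + n - i}(1^{i-1}, x_j) equals h_k(x_1,…,x_n) · ∏_{i<j}(x_i - x_j), where λ_1 = k and λ_i = 0 for i ≥ 2. -/
/-- The complete homogeneous symmetric polynomial of degree `n` evaluated at `x : Fin N → R`. -/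
def hpoly {R : Type*} [CommSemiring R] {N : ℕ} (n : ℕ) (x : Fin N → R) : R :=
  ∑ d ∈ Finset.Nat.antidiagonalTuple N n, ∏ i, x i ^ d i

/-!
For `i ≥ 1`, row `i` of the matrix is `x_j ↦ h_{n-1-i}(1^i, x_j)`, the evaluation of a
polynomial of degree `n - 1 - i` with top coefficient `h_0 = 1`; row `0` is
`x_j ↦ x_j ^ (k + n - 1)`. Row `0` may be replaced by the evaluation of any polynomial `r`
agreeing with `Y ^ (k + n - 1)` on the `x_j`, and there is such an `r` of degree `< n` whose
coefficient of `Y ^ (n - 1)` is `h_k(x)`: it is built by induction on the number of nodes from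
`Y ^ N - y ^ N = (Y - y) ∑_{a+b=N-1} Y ^ a y ^ b` and `h_k(z, y) = ∑_{a+b=k} h_a(z) y ^ b`.
The matrix of evaluations then factors as an upper triangular matrix of coefficients times the
reversed Vandermonde matrix, so its determinant is `h_k(x) · ∏_{i<j} (x_i - x_j)`.
-/

open Finset Polynomial Matrix

section CommSemiring
variable {R : Type*} [CommSemiring R]

theorem hpoly_zero {N : ℕ} (x : Fin N → R) : hpoly 0 x = 1 := by
  simp [hpoly, Nat.antidiagonalTuple_zero_right]

theorem hpoly_fin_zero (m : ℕ) (z : Fin 0 → R) : hpoly m z = if m = 0 then 1 else 0 := by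
  cases m <;> simp [hpoly, Nat.antidiagonalTuple_zero_zero, Nat.antidiagonalTuple_zero_succ]

theorem hpoly_snoc {N : ℕ} (m : ℕ) (z : Fin N → R) (y : R) :
    hpoly m (Fin.snoc z y : Fin (N + 1) → R) =
      ∑ ab ∈ antidiagonal m, hpoly ab.1 z * y ^ ab.2 := by
  simp only [hpoly, sum_mul, sum_sigma']
  refine sum_nbij' (fun d => ⟨(m - d (Fin.last N), d (Fin.last N)), Fin.init d⟩)
    (fun p => Fin.snoc p.2 p.1.2) ?_ ?_ ?_ ?_ ?_
  · intro d hd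
    simp only [mem_sigma, HasAntidiagonal.mem_antidiagonal, Nat.mem_antidiagonalTuple] at hd ⊢
    rw [Fin.sum_univ_castSucc] at hd
    exact ⟨by omega, by simp only [Fin.init]; omega⟩
  · intro p hp
    simp only [mem_sigma, HasAntidiagonal.mem_antidiagonal, Nat.mem_antidiagonalTuple] at hp ⊢
    rw [Fin.sum_univ_castSucc]
    simp [hp.1, hp.2]
  · intro d _
    simp
  · intro p hp
    simp only [mem_sigma, HasAntidiagonal.mem_antidiagonal] at hp
    ext <;> simp only [Fin.snoc_last, Fin.init_snoc, heq_eq_eq]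
    omega
  · intro d _
    simp [Fin.prod_univ_castSucc, Fin.init]

theorem hpoly_fin_one (m : ℕ) (x : Fin 1 → R) : hpoly m x = x 0 ^ m := by
  conv_lhs => rw [← Fin.snoc_init_self x]
  rw [hpoly_snoc, sum_eq_single (0, m)]
  · simp [hpoly_fin_zero]
  · rintro ⟨a, b⟩ hab hne
    rw [HasAntidiagonal.mem_antidiagonal] at hab
    rw [hpoly_fin_zero, if_neg (by rintro rfl; simp_all), zero_mul]
  · simp

noncomputable def hpolySnocPoly {N : ℕ} (m : ℕ) (z : Fin N → R) : R[X] :=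
  ∑ ab ∈ antidiagonal m, C (hpoly ab.1 z) * X ^ ab.2

theorem eval_hpolySnocPoly {N : ℕ} (m : ℕ) (z : Fin N → R) (y : R) :
    (hpolySnocPoly m z).eval y = hpoly m (Fin.snoc z y : Fin (N + 1) → R) := by
  simp [hpolySnocPoly, eval_finsetSum, hpoly_snoc]

theorem natDegree_hpolySnocPoly_le {N : ℕ} (m : ℕ) (z : Fin N → R) :
    (hpolySnocPoly m z).natDegree ≤ m :=
  natDegree_sum_le_of_forall_le _ _ fun ab hab =>
    (natDegree_C_mul_X_pow_le _ _).trans (by rw [HasAntidiagonal.mem_antidiagonal] at hab; omega)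

theorem coeff_hpolySnocPoly_self {N : ℕ} (m : ℕ) (z : Fin N → R) :
    (hpolySnocPoly m z).coeff m = 1 := by
  rw [hpolySnocPoly, finsetSum_coeff, sum_eq_single (0, m)]
  · simp [hpoly_zero]
  · rintro ⟨a, b⟩ hab hne
    rw [HasAntidiagonal.mem_antidiagonal] at hab
    rw [coeff_C_mul_X_pow, if_neg (by rintro rfl; simp_all)]
  · simp

end CommSemiring

section CommRing
variable {R : Type*} [CommRing R]

theorem exists_natDegree_le_coeff_eq_hpoly_eval_eq_pow (n k : ℕ) (x : Fin (n + 1) → R) :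
    ∃ r : R[X], r.natDegree ≤ n ∧ r.coeff n = hpoly k x ∧
      ∀ j, r.eval (x j) = x j ^ (k + n) := by
  induction n generalizing k with
  | zero =>
    refine ⟨C (x 0 ^ k), by rw [natDegree_C], by rw [coeff_C_zero, hpoly_fin_one], fun j => ?_⟩
    rw [Fin.fin_one_eq_zero j, eval_C, add_zero]
  | succ n ih =>
    set y := x (Fin.last (n + 1))
    set z := Fin.init x
    choose r hr_deg hr_coeff hr_eval using fun c => ih c z
    -- `S` interpolates `(Y ^ (k + n + 1) - y ^ (k + n + 1)) / (Y - y)` on the nodes `z`.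
    set S : R[X] := ∑ b ∈ range n, C (y ^ (k + n - b)) * X ^ b +
      ∑ c ∈ range (k + 1), C (y ^ (k - c)) * r c
    have hS_deg : S.natDegree ≤ n := by
      refine natDegree_add_le_of_degree_le (natDegree_sum_le_of_forall_le _ _ fun b hb => ?_)
        (natDegree_sum_le_of_forall_le _ _ fun c _ => ?_)
      · exact (natDegree_C_mul_X_pow_le _ _).trans (by rw [mem_range] at hb; omega)
      · exact (natDegree_C_mul_le _ _).trans (hr_deg c)
    have hS_coeff : S.coeff n = hpoly k x := by
      have hlow : ∀ b ∈ range n, (C (y ^ (k + n - b)) * X ^ b : R[X]).coeff n = 0 :=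
        fun b hb => by rw [coeff_C_mul_X_pow, if_neg (by rw [mem_range] at hb; omega)]
      rw [coeff_add, finsetSum_coeff, finsetSum_coeff, sum_eq_zero hlow, zero_add,
        ← Fin.snoc_init_self x, hpoly_snoc, Nat.sum_antidiagonal_eq_sum_range_succ_mk]
      exact sum_congr rfl fun c _ => by rw [coeff_C_mul, hr_coeff, mul_comm]
    have hS_eval : ∀ i, S.eval (z i) =
        ∑ b ∈ range (k + (n + 1)), z i ^ b * y ^ (k + (n + 1) - 1 - b) := by
      intro i
      simp only [S, eval_add, eval_finsetSum, eval_mul, eval_C, eval_X_pow, hr_eval]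
      rw [show k + (n + 1) = n + (k + 1) by ring,
        sum_range_add (fun b => z i ^ b * y ^ (n + (k + 1) - 1 - b)) n (k + 1)]
      congr 1 <;> refine sum_congr rfl fun b _ => ?_
      · rw [mul_comm, show n + (k + 1) - 1 - b = k + n - b by omega]
      · rw [mul_comm, show n + (k + 1) - 1 - (n + b) = k - b by omega, add_comm b]
    refine ⟨C (y ^ (k + (n + 1))) + (X - C y) * S, ?_, ?_, fun j => ?_⟩
    · refine natDegree_add_le_of_degree_le (by rw [natDegree_C]; omega)
        (natDegree_mul_le.trans ?_)
      linarith [natDegree_X_sub_C_le y]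
    · rw [coeff_add, coeff_C, if_neg n.succ_ne_zero, zero_add, sub_mul, coeff_sub, coeff_X_mul,
        coeff_C_mul, coeff_eq_zero_of_natDegree_lt (by omega : S.natDegree < n + 1), mul_zero,
        sub_zero, hS_coeff]
    · induction j using Fin.lastCases with
      | last => simp [y]
      | cast i =>
        rw [eval_add, eval_mul, eval_C, eval_sub, eval_X, eval_C, show x i.castSucc = z i from rfl,
          hS_eval, mul_comm, geom_sum₂_mul]
        ring

theorem det_of_pow_rev {n : ℕ} (x : Fin n → R) :
    (of fun i j : Fin n => x j ^ (n - 1 - (i : ℕ))).det =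
      ∏ i, ∏ j ∈ Ioi i, (x i - x j) := by
  have hrev : (of fun i j : Fin n => x j ^ (n - 1 - (i : ℕ))) =
      (vandermonde (x ∘ Fin.rev))ᵀ.submatrix Fin.revPerm Fin.revPerm := by
    ext i j
    simp only [of_apply, submatrix_apply, Fin.revPerm_apply, transpose_apply, vandermonde_apply,
      Function.comp_apply, Fin.rev_rev, Fin.val_rev]
    congr 1
    omega
  rw [hrev, det_submatrix_equiv_self, det_transpose, det_vandermonde]
  calc ∏ i, ∏ j ∈ Ioi i, (x (Fin.rev j) - x (Fin.rev i))
      = ∏ i, ∏ j ∈ Iio i, (x j - x i) := Fintype.prod_equiv Fin.revPerm _ _ fun i => by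
        rw [Fin.revPerm_apply, ← Fin.map_revPerm_Ioi, prod_map]
        rfl
    _ = ∏ i, ∏ j ∈ Ioi i, (x i - x j) := prod_comm' (by simp)

theorem det_of_eval_eq_prod_coeff_mul {n : ℕ} (p : Fin n → R[X])
    (hp : ∀ i, (p i).natDegree ≤ n - 1 - i) (x : Fin n → R) :
    (of fun i j => (p i).eval (x j)).det =
      (∏ i, (p i).coeff (n - 1 - i)) * ∏ i, ∏ j ∈ Ioi i, (x i - x j) := by
  have hfac : (of fun i j => (p i).eval (x j)) =
      (of fun i m : Fin n => (p i).coeff (n - 1 - (m : ℕ))) *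
        of fun (m j : Fin n) => x j ^ (n - 1 - (m : ℕ)) := by
    ext i j
    rw [mul_apply, of_apply, eval_eq_sum_range' (n := n) ((hp i).trans_lt (by omega)),
      ← Fin.sum_univ_eq_sum_range]
    refine Fintype.sum_equiv Fin.revPerm _ _ fun m => ?_
    rw [Fin.revPerm_apply, of_apply, of_apply, Fin.val_rev,
      show n - 1 - (n - (m + 1)) = m by omega]
  have htri : (of fun i m : Fin n => (p i).coeff (n - 1 - (m : ℕ))).IsUpperTriangular :=
    fun i m (him : m < i) => coeff_eq_zero_of_natDegree_lt ((hp i).trans_lt (by omega))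
  rw [hfac, det_mul, det_of_isUpperTriangular htri, det_of_pow_rev]
  rfl

end CommRing

/-- Indices are `0`-based: row `i` adjoins `i` ones and has degree `λ_{i+1} + n - 1 - i`. -/
theorem stmt9 {R : Type*} [CommRing R] (n k : ℕ) (hn : 1 ≤ n) (x : Fin n → R) :
    Matrix.det (Matrix.of fun i j : Fin n =>
        hpoly ((if (i : ℕ) = 0 then k else 0) + (n - 1 - (i : ℕ)))
          (Fin.append (fun _ : Fin (i : ℕ) => (1 : R)) ![x j])) =
      hpoly k x * ∏ i : Fin n, ∏ j ∈ Finset.Ioi i, (x i - x j) := by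
  obtain ⟨m, rfl⟩ := Nat.exists_eq_add_of_le' hn
  obtain ⟨r, hr_deg, hr_coeff, hr_eval⟩ := exists_natDegree_le_coeff_eq_hpoly_eval_eq_pow m k x
  let p : Fin (m + 1) → R[X] :=
    Fin.cons r fun i => hpolySnocPoly (m - (i + 1)) (fun _ : Fin (i + 1) => (1 : R))
  have hM : (of fun i j : Fin (m + 1) =>
      hpoly ((if (i : ℕ) = 0 then k else 0) + (m + 1 - 1 - (i : ℕ)))
        (Fin.append (fun _ : Fin (i : ℕ) => (1 : R)) ![x j])) =
      of fun i j => (p i).eval (x j) := by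
    ext i j
    induction i using Fin.cases with
    | zero =>
      simp only [of_apply, Fin.val_zero, if_true, Fin.cons_zero, p, hr_eval]
      rw [hpoly_fin_one, Fin.append_right_eq_snoc]
      rfl
    | succ i =>
      simp only [of_apply, Fin.val_succ, Nat.add_one_ne_zero, if_false, zero_add, Fin.cons_succ, p,
        eval_hpolySnocPoly, Fin.append_right_eq_snoc, cons_val_zero, Nat.add_sub_cancel]
  have hp_deg : ∀ i, (p i).natDegree ≤ m + 1 - 1 - i := by
    intro i
    induction i using Fin.cases with
    | zero => simpa [p] using hr_deg
    | succ i => simpa [p] using natDegree_hpolySnocPoly_le _ _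
  rw [hM, det_of_eval_eq_prod_coeff_mul p hp_deg, Fin.prod_univ_succ]
  simp [p, hr_coeff, coeff_hpolySnocPoly_self]
end

section
/- The map τ defined on the generators of the ring of symmetric functions by τ(h_k) = ∑_{ℓ=0}^k C(k-1, k-ℓ) e_ℓ (for k ≥ 1) extends to a ring endomorphism of Λ which is an involution: τ ∘ τ = id. -/
/-- The ring of symmetric functions over `ℚ`: the polynomial ring on countably many free
generators, `X n` playing the role of `h_{n+1}`. -/
abbrev SymmFn : Type := MvPolynomial ℕ ℚ

/-- The complete homogeneous symmetric functions (`h 0 = 1`, `h (n+1) = X n`). -/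
noncomputable def h : ℕ → SymmFn
  | 0 => 1
  | n + 1 => MvPolynomial.X n

/-- The elementary symmetric functions `e_n`, expressed in terms of the `h`'s via the
classical recursion `e_n = ∑_{i=1}^n (-1)^{i-1} h_i e_{n-i}` (equivalent to
`∑_{i} (-1)^i e_i h_{n-i} = 0`, i.e. `E(t) H(-t) = 1`). -/
noncomputable def e : ℕ → SymmFn
  | 0 => 1
  | n + 1 => ∑ i ∈ Finset.range (n + 1), (-1 : ℚ) ^ i • (h (i + 1) * e (n - i))
  decreasing_by exact Nat.lt_succ_of_le (Nat.sub_le n i)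

/-- The endomorphism `τ` of the ring of symmetric functions determined on generators by
`τ(h_k) = ∑_{ℓ=0}^k C(k-1, k-ℓ) e_ℓ` (for `k ≥ 1`). Here the generator `X n` is `h_{n+1}`,
so `C(k-1, k-ℓ) = C(n, n+1-ℓ)`. -/
noncomputable def τ : SymmFn →ₐ[ℚ] SymmFn :=
  MvPolynomial.aeval fun n => ∑ l ∈ Finset.range (n + 2), (n.choose (n + 1 - l) : ℚ) • e l

/-! Let `H(t) = ∑ hₖ tᵏ`, `E(t) = ∑ eₖ tᵏ` and `φ(t) = t / (1 - t)`. The recursion defining `e`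
says `E(t) H(-t) = 1`, and since `[tᵏ] φ(t)^ℓ = C(k-1, k-ℓ)` the definition of `τ` says
`τH(t) = E(φ(t))`. Applying `τ` to `E(t) H(-t) = 1` and substituting `φ(t)` for `t` gives
`τE(φ(t)) · E(φ(-φ(t))) = 1`; as `φ(-φ(t)) = -t`, this forces `τE(φ(t)) = E(-t)⁻¹ = H(t)`,
that is, `ττH(t) = τE(φ(t)) = H(t)`. -/

open Finset

namespace PowerSeries

variable {R : Type*} [CommRing R]

variable (R) in
noncomputable def xDivOneSubX : R⟦X⟧ := X * mk 1

lemma xDivOneSubX_mul_one_sub_X : xDivOneSubX R * (1 - X) = X := by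
  rw [xDivOneSubX, mul_assoc, mk_one_mul_one_sub_eq_one, mul_one]

lemma constantCoeff_xDivOneSubX : constantCoeff (xDivOneSubX R) = 0 := by
  simp [xDivOneSubX]

lemma hasSubst_xDivOneSubX : HasSubst (xDivOneSubX R) :=
  HasSubst.of_constantCoeff_zero' constantCoeff_xDivOneSubX

lemma hasSubst_neg_xDivOneSubX : HasSubst (-xDivOneSubX R) :=
  HasSubst.of_constantCoeff_zero' (by simp [constantCoeff_xDivOneSubX])

lemma map_xDivOneSubX {S : Type*} [CommRing S] (f : R →+* S) :
    map f (xDivOneSubX R) = xDivOneSubX S := by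
  ext n
  cases n <;> simp [xDivOneSubX, coeff_succ_X_mul]

lemma map_subst_xDivOneSubX {S : Type*} [CommRing S] (f : R →+* S) (g : R⟦X⟧) :
    map f (g.subst (xDivOneSubX R)) = (map f g).subst (xDivOneSubX S) := by
  calc map f (g.subst (xDivOneSubX R))
      = (map f g).subst (map f (xDivOneSubX R)) := map_subst hasSubst_xDivOneSubX g
    _ = (map f g).subst (xDivOneSubX S) := by rw [map_xDivOneSubX]

lemma coeff_xDivOneSubX_pow (k l : ℕ) :
    coeff k (xDivOneSubX R ^ l) = if l ≤ k then ((k - 1).choose (k - l) : R) else 0 := by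
  rw [xDivOneSubX, mul_pow, coeff_X_pow_mul']
  split_ifs with hlk
  · cases l with
    | zero => cases k <;> simp [coeff_one]
    | succ d =>
      rw [mk_one_pow_eq_mk_choose_add, coeff_mk, show d + (k - (d + 1)) = k - 1 by omega,
        Nat.choose_symm_of_eq_add (b := k - (d + 1)) (by omega)]
  · rfl

lemma coeff_subst_xDivOneSubX (f : R⟦X⟧) (k : ℕ) :
    coeff k (f.subst (xDivOneSubX R)) =
      ∑ l ∈ range (k + 1), (k - 1).choose (k - l) • coeff l f := by
  rw [coeff_subst' hasSubst_xDivOneSubX, finsum_eq_sum_of_support_subset (s := range (k + 1))]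
  · refine sum_congr rfl fun l hl => ?_
    rw [coeff_xDivOneSubX_pow, if_pos (by simpa [Nat.lt_succ_iff] using hl), smul_eq_mul,
      nsmul_eq_mul, mul_comm]
  · intro l hl
    contrapose! hl
    simp only [coe_range, Set.mem_Iio, not_lt] at hl
    simp [coeff_xDivOneSubX_pow, show ¬ l ≤ k by omega]

lemma subst_neg_xDivOneSubX : (xDivOneSubX R).subst (-xDivOneSubX R) = -X := by
  have hsubst := congrArg (substAlgHom (R := R) (hasSubst_neg_xDivOneSubX (R := R)))
    (xDivOneSubX_mul_one_sub_X (R := R))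
  simp only [map_mul, map_sub, map_one, substAlgHom_X, coe_substAlgHom] at hsubst
  -- `hsubst` reads `φ(-φ) (1 + φ) = -φ`, and `(1 + φ) (1 - X) = 1`
  linear_combination (1 - X) * hsubst - ((xDivOneSubX R).subst (-xDivOneSubX R) + 1) *
    xDivOneSubX_mul_one_sub_X (R := R)

lemma subst_xDivOneSubX_rescale_neg_one_subst_xDivOneSubX (f : R⟦X⟧) :
    (rescale (-1) (f.subst (xDivOneSubX R))).subst (xDivOneSubX R) = rescale (-1) f := by
  have hneg : HasSubst (-X : R⟦X⟧) := HasSubst.of_constantCoeff_zero' (by simp)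
  simp only [rescale_eq_subst, neg_one_smul]
  have hsneg : (-X : R⟦X⟧).subst (xDivOneSubX R) = -xDivOneSubX R := by
    rw [← coe_substAlgHom hasSubst_xDivOneSubX, map_neg, substAlgHom_X]
  rw [subst_comp_subst_apply hneg hasSubst_xDivOneSubX, hsneg,
    subst_comp_subst_apply hasSubst_xDivOneSubX hasSubst_neg_xDivOneSubX, subst_neg_xDivOneSubX]

end PowerSeries

open PowerSeries

noncomputable def hSeries : SymmFn⟦X⟧ := mk h

noncomputable def eSeries : SymmFn⟦X⟧ := mk e

lemma e_succ (n : ℕ) :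
    e (n + 1) = ∑ i ∈ range (n + 1), (-1 : ℚ) ^ i • (h (i + 1) * e (n - i)) := by
  rw [e]

lemma eSeries_mul_rescale_neg_one_hSeries : eSeries * rescale (-1) hSeries = 1 := by
  refine ext fun n => ?_
  rw [mul_comm, coeff_mul, Nat.sum_antidiagonal_eq_sum_range_succ_mk]
  simp only [coeff_rescale, hSeries, eSeries, coeff_mk, coeff_one]
  cases n with
  | zero => simp [h, e]
  | succ m =>
    rw [sum_range_succ', Nat.sub_zero, e_succ, if_neg m.succ_ne_zero]
    simp only [pow_succ, Nat.succ_sub_succ, Algebra.smul_def, map_pow, map_neg, map_one]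
    simp [h, mul_assoc, sum_neg_distrib]

lemma rescale_neg_one_eSeries_mul_hSeries : rescale (-1) eSeries * hSeries = 1 := by
  have := congrArg (rescale (-1 : SymmFn)) eSeries_mul_rescale_neg_one_hSeries
  rwa [map_mul, rescale_rescale, neg_one_mul, neg_neg, rescale_one, map_one] at this

lemma map_τ_hSeries :
    map (τ : SymmFn →+* SymmFn) hSeries = eSeries.subst (xDivOneSubX SymmFn) := by
  refine ext fun k => ?_
  rw [coeff_map, coeff_subst_xDivOneSubX]
  cases k with
  | zero => simp [hSeries, eSeries, h, e]
  | succ n =>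
    simp [hSeries, eSeries, h, τ, Nat.cast_smul_eq_nsmul]

lemma subst_xDivOneSubX_map_τ_eSeries :
    (map (τ : SymmFn →+* SymmFn) eSeries).subst (xDivOneSubX SymmFn) = hSeries := by
  have hτ := congrArg (map (τ : SymmFn →+* SymmFn)) eSeries_mul_rescale_neg_one_hSeries
  rw [map_mul, ← rescale_map, map_neg, map_one, map_τ_hSeries, map_one] at hτ
  have hsubst := congrArg (substAlgHom (R := SymmFn) (hasSubst_xDivOneSubX (R := SymmFn))) hτ
  rw [map_mul, map_one, coe_substAlgHom,
    subst_xDivOneSubX_rescale_neg_one_subst_xDivOneSubX] at hsubst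
  exact left_inv_eq_right_inv hsubst rescale_neg_one_eSeries_mul_hSeries

lemma map_τ_map_τ_hSeries :
    map (τ : SymmFn →+* SymmFn) (map (τ : SymmFn →+* SymmFn) hSeries) = hSeries := by
  rw [map_τ_hSeries, map_subst_xDivOneSubX, subst_xDivOneSubX_map_τ_eSeries]

/-- `τ` is an involution: `τ ∘ τ = id`. -/
theorem stmt11 : ∀ p : SymmFn, τ (τ p) = p := by
  suffices τ.comp τ = AlgHom.id ℚ SymmFn from fun p => DFunLike.congr_fun this p
  refine MvPolynomial.algHom_ext fun n => ?_
  simpa [hSeries, h] using congrArg (coeff (n + 1)) map_τ_map_τ_hSeries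
end

section
/- Refined single-column formula: for λ = (1^k), μ = ∅, the refined dual Grothendieck polynomial satisfies g_{(1^k)}(t; x) = e_k(t_1, t_2, …, t_{k-1}, x_1, …, x_m), i.e., the generating function ∑_T ∏_i x_i^{c_i(T)} ∏_j t_j^{d_j(T)} over weakly increasing sequences T = (a_1 ≤ ⋯ ≤ a_k) with entries in {1,…,m}, where c_i counts whether i appears and d_j(T) = 1 if a_j = a_{j+1} (entry in row j equals the entry below) and 0 otherwise, equals the elementary symmetric polynomial e_k in the k-1+m variables t_1,…,t_{k-1}, x_1,…,x_m. -/
/-!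
Both sides satisfy Pascal's rule `e_{k+1}(y, z) = e_{k+1}(z) + y e_k(z)`. Sort the weakly
increasing sequences by their use of the smallest value: those avoiding it are sequences in the
remaining values, weighted by the remaining `x`'s; those starting `1, 1` are `t₁` times a shorter
sequence starting at `1`, and those starting `1, v` with `v > 1` are `x₁` times a shorter sequence
avoiding `1`. Peeling off `x₁` and `t₁` in this way is an induction on `m` and, inside it, on `k`.
-/

open scoped Classical

/-- The elementary symmetric polynomial of degree `n` evaluated at `x : Fin N → R`. -/
def epoly {R : Type*} [CommSemiring R] {N : ℕ} (n : ℕ) (x : Fin N → R) : R :=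
  ∑ s ∈ Finset.powersetCard n (Finset.univ : Finset (Fin N)), ∏ i ∈ s, x i

namespace Multiset

variable {R : Type*} [CommSemiring R]

theorem esymm_cons (a : R) (s : Multiset R) (k : ℕ) :
    (a ::ₘ s).esymm (k + 1) = s.esymm (k + 1) + a * s.esymm k := by
  simp only [esymm, powersetCard_cons, map_add, sum_add, map_map, Function.comp_def, prod_cons,
    sum_map_mul_left]

theorem coe_ofFn_succ {α : Type*} {n : ℕ} (f : Fin (n + 1) → α) :
    (List.ofFn f : Multiset α) = f 0 ::ₘ List.ofFn (Fin.tail f) := by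
  rw [List.ofFn_succ]; rfl

theorem esymm_eq_zero_of_card_lt {s : Multiset R} {k : ℕ} (h : card s < k) : s.esymm k = 0 := by
  simp [esymm, powersetCard_eq_empty k h]

end Multiset

theorem epoly_eq_esymm {R : Type*} [CommSemiring R] {N : ℕ} (k : ℕ) (x : Fin N → R) :
    epoly k x = (List.ofFn x : Multiset R).esymm k := by
  rw [epoly, ← Finset.esymm_map_val, Fin.univ_val_map]

open Finset

namespace SingleColumn

variable {R : Type*} [CommSemiring R] {n m : ℕ}

def columnWeight (t : Fin n → R) (x : Fin m → R) (a : Fin (n + 1) → Fin m) : R :=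
  (∏ v ∈ univ.image a, x v) * ∏ j : Fin n, if a j.castSucc = a j.succ then t j else 1

theorem columnWeight_succ_comp (t : Fin n → R) (x : Fin (m + 1) → R) (b : Fin (n + 1) → Fin m) :
    columnWeight t x (Fin.succ ∘ b) = columnWeight t (Fin.tail x) b := by
  simp only [columnWeight, ← image_image, prod_image fun _ _ _ _ h => Fin.succ_injective _ h,
    Function.comp_apply, Fin.succ_inj, Fin.tail]

theorem columnWeight_cons_zero (t : Fin (n + 1) → R) (x : Fin (m + 1) → R)
    {b : Fin (n + 1) → Fin (m + 1)} (hb : Monotone b) :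
    columnWeight t x (Fin.cons 0 b) =
      (if b 0 = 0 then t 0 else x 0) * columnWeight (Fin.tail t) x b := by
  have himage :
      univ.image (Fin.cons 0 b : Fin (n + 2) → Fin (m + 1)) = insert 0 (univ.image b) := by
    ext v; simp [Fin.exists_fin_succ, eq_comm]
  have hzero_mem : 0 ∈ univ.image b ↔ b 0 = 0 := by
    simp only [mem_image, mem_univ, true_and]
    exact ⟨fun ⟨i, hi⟩ => le_antisymm (hi ▸ hb (Fin.zero_le i)) (Fin.zero_le _), fun h => ⟨0, h⟩⟩
  rw [columnWeight, columnWeight, himage, Fin.prod_univ_succ]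
  simp only [Fin.cons_zero, Fin.cons_succ, ← Fin.succ_castSucc, Fin.castSucc_zero, Fin.tail]
  by_cases h : b 0 = 0
  · simp only [h, if_true, insert_eq_of_mem (hzero_mem.2 h)]; ring
  · simp only [h, Ne.symm h, if_false, prod_insert (mt hzero_mem.1 h)]; ring

theorem sum_monotone_ne_zero (t : Fin n → R) (x : Fin (m + 1) → R) :
    ∑ a ∈ {a : Fin (n + 1) → Fin (m + 1) | Monotone a ∧ a 0 ≠ 0}, columnWeight t x a =
      ∑ b ∈ {b : Fin (n + 1) → Fin m | Monotone b}, columnWeight t (Fin.tail x) b := by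
  symm
  refine sum_bij (fun b _ => Fin.succ ∘ b) ?_ ?_ ?_ ?_
  · intro b hb
    simp only [mem_filter, mem_univ, true_and] at hb ⊢
    exact ⟨(Fin.strictMono_succ.monotone).comp hb, Fin.succ_ne_zero _⟩
  · intro b₁ _ b₂ _ h
    exact funext fun i => Fin.succ_injective _ (congrFun h i)
  · intro a ha
    simp only [mem_filter, mem_univ, true_and] at ha
    have hpos : ∀ i, a i ≠ 0 := fun i h0 =>
      ha.2 (le_antisymm (h0 ▸ ha.1 (Fin.zero_le i)) (Fin.zero_le _))
    choose b hb using fun i => Fin.exists_succ_eq.2 (hpos i)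
    refine ⟨b, ?_, funext hb⟩
    simp only [mem_filter, mem_univ, true_and]
    intro i j hij
    have := ha.1 hij
    rwa [← hb i, ← hb j, Fin.succ_le_succ_iff] at this
  · intro b _
    exact (columnWeight_succ_comp t x b).symm

theorem sum_monotone_fin_one_zero (t : Fin 0 → R) (x : Fin (m + 1) → R) :
    ∑ a ∈ {a : Fin 1 → Fin (m + 1) | Monotone a ∧ a 0 = 0}, columnWeight t x a = x 0 := by
  have : ({a : Fin 1 → Fin (m + 1) | Monotone a ∧ a 0 = 0} : Finset _) = {fun _ => 0} := by
    ext a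
    simp [funext_iff, Fin.forall_fin_one, Subsingleton.monotone a]
  simp [this, columnWeight]

theorem sum_monotone_cons_zero (t : Fin (n + 1) → R) (x : Fin (m + 1) → R) :
    ∑ a ∈ {a : Fin (n + 2) → Fin (m + 1) | Monotone a ∧ a 0 = 0}, columnWeight t x a =
      t 0 * ∑ b ∈ {b : Fin (n + 1) → Fin (m + 1) | Monotone b ∧ b 0 = 0},
          columnWeight (Fin.tail t) x b +
        x 0 * ∑ b ∈ {b : Fin (n + 1) → Fin m | Monotone b},
          columnWeight (Fin.tail t) (Fin.tail x) b := by
  have hcons : ∑ a ∈ {a : Fin (n + 2) → Fin (m + 1) | Monotone a ∧ a 0 = 0}, columnWeight t x a =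
      ∑ b ∈ {b : Fin (n + 1) → Fin (m + 1) | Monotone b}, columnWeight t x (Fin.cons 0 b) := by
    refine sum_nbij' Fin.tail (fun b => Fin.cons (0 : Fin (m + 1)) b) ?_ ?_ ?_ ?_ ?_
    · intro a ha
      simp only [mem_filter, mem_univ, true_and] at ha ⊢
      exact ha.1.comp Fin.strictMono_succ.monotone
    · intro b hb
      simp only [mem_filter, mem_univ, true_and] at hb ⊢
      exact ⟨hb.vecCons (Fin.zero_le _), Fin.cons_zero _ _⟩
    · intro a ha
      simp only [mem_filter, mem_univ, true_and] at ha
      exact ha.2 ▸ Fin.cons_self_tail a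
    · intro b _
      exact Fin.tail_cons _ _
    · intro a ha
      simp only [mem_filter, mem_univ, true_and] at ha
      rw [← ha.2, Fin.cons_self_tail]
  rw [hcons, ← sum_filter_add_sum_filter_not _ (fun b => b 0 = 0), ← sum_monotone_ne_zero,
    filter_filter, filter_filter, mul_sum, mul_sum]
  congr 1 <;> refine sum_congr rfl fun b hb => ?_ <;> rw [mem_filter] at hb
  · rw [columnWeight_cons_zero _ _ hb.2.1, if_pos hb.2.2]
  · rw [columnWeight_cons_zero _ _ hb.2.1, if_neg hb.2.2]

theorem sum_columnWeight_eq_esymm (t : Fin n → R) (x : Fin m → R) :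
    ∑ a ∈ {a : Fin (n + 1) → Fin m | Monotone a}, columnWeight t x a =
      (List.ofFn t + List.ofFn x : Multiset R).esymm (n + 1) := by
  induction m generalizing n with
  | zero =>
    rw [Multiset.esymm_eq_zero_of_card_lt (by simp)]
    simp
  | succ m ih =>
    have hzero : ∀ (k : ℕ) (s : Fin k → R),
        ∑ a ∈ {a : Fin (k + 1) → Fin (m + 1) | Monotone a ∧ a 0 = 0}, columnWeight s x a =
          x 0 * (List.ofFn s + List.ofFn (Fin.tail x) : Multiset R).esymm k := by
      intro k
      induction k with
      | zero => intro s; simp [sum_monotone_fin_one_zero, Multiset.esymm]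
      | succ k ihk =>
        intro s
        rw [sum_monotone_cons_zero, ihk, ih, Multiset.coe_ofFn_succ s, Multiset.cons_add,
          Multiset.esymm_cons]
        ring
    rw [← sum_filter_add_sum_filter_not _ (fun a => a 0 = 0), filter_filter, filter_filter,
      hzero, sum_monotone_ne_zero, ih, Multiset.coe_ofFn_succ x, Multiset.add_cons,
      Multiset.esymm_cons]
    ring

end SingleColumn

/-- Refined single-column formula: `g_{(1^k)}(t; x) = e_k(t₁,…,t_{k-1}, x₁,…,x_m)`.
An RPP of shape `(1^k)` is a weakly increasing sequence `a : Fin k → Fin m`; its weight is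
`∏_{v distinct value} x_v · ∏_{j : a_j = a_{j+1}} t_j`. -/
theorem stmt18 {R : Type*} [CommSemiring R] (m k : ℕ) (hk : 1 ≤ k)
    (t : Fin (k - 1) → R) (x : Fin m → R) :
    ∑ a ∈ Finset.univ.filter (fun a : Fin k → Fin m => Monotone a),
        (∏ v ∈ Finset.image a Finset.univ, x v) *
          ∏ j : Fin (k - 1),
            (if a (Fin.cast (by omega : k - 1 + 1 = k) j.castSucc) =
                a (Fin.cast (by omega : k - 1 + 1 = k) j.succ) then t j else 1) =
      epoly k (Fin.append t x) := by
  obtain ⟨n, rfl⟩ : ∃ n, k = n + 1 := ⟨k - 1, (Nat.succ_pred_eq_of_pos hk).symm⟩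
  rw [epoly_eq_esymm, List.ofFn_fin_append, ← Multiset.coe_add]
  exact SingleColumn.sum_columnWeight_eq_esymm t x
end

section
/- For any partition λ with ℓ(λ) ≤ n, applying the involutive automorphism τ of Λ (defined by τ(h_k) = ∑_ℓ C(k-1, k-ℓ) e_ℓ) to the determinant det[φ^{i-j} h_{λ_i − i + j}]_{1≤i,j≤n} yields det[e_{λ_i − i + j}(1^{λ_i − 1}, x)]_{1≤i,j≤n}; that is, entrywise τ(φ^{i-j} h_{λ_i − i + j}) = ∑_ℓ C(λ_i − 1, λ_i − i + j − ℓ) e_ℓ = e_{λ_i − i + j}(1^{λ_i − 1}, x). -/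
/-- `h` with an integer index: `h m = 0` for `m < 0`. -/
noncomputable def hInt (m : ℤ) : SymmFn := if 0 ≤ m then h m.toNat else 0

/-- The automorphism `φ` with `φ(h_n) = h_0 + ⋯ + h_n`. -/
noncomputable def φ : SymmFn →ₐ[ℚ] SymmFn :=
  MvPolynomial.aeval fun n => ∑ k ∈ Finset.range (n + 2), h k

/-- The inverse of `φ`, determined by `φ⁻¹(h_n) = h_n - h_{n-1}`. -/
noncomputable def ψ : SymmFn →ₐ[ℚ] SymmFn :=
  MvPolynomial.aeval fun n => h (n + 1) - h n

/-- Integer powers `φ^r` of the automorphism `φ` (negative powers via `ψ = φ⁻¹`). -/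
noncomputable def φpow (r : ℤ) (p : SymmFn) : SymmFn :=
  if 0 ≤ r then (⇑φ)^[r.toNat] p else (⇑ψ)^[(-r).toNat] p

/-- The generalized binomial coefficient: the coefficient of `t^b` in `(1+t)^a`, `a b : ℤ`
(zero for `b < 0`). -/
noncomputable def genChoose (a b : ℤ) : ℤ :=
  if 0 ≤ b then Ring.choose a b.toNat else 0

open Finset in
lemma gc_pascal (a b : ℤ) : genChoose (a + 1) b = genChoose a (b - 1) + genChoose a b := by
  unfold genChoose
  rcases lt_trichotomy b 0 with hb | rfl | hb
  · rw [if_neg (by omega), if_neg (by omega), if_neg (by omega)]; ring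
  · rw [if_pos le_rfl, if_pos le_rfl, if_neg (by omega)]
    simp [Ring.choose_zero_right]
  · rw [if_pos (by omega), if_pos (by omega), if_pos (by omega)]
    have hb' : b.toNat = (b - 1).toNat + 1 := by omega
    rw [hb', Ring.choose_succ_succ]

lemma gc_neg {a b : ℤ} (hb : b < 0) : genChoose a b = 0 := by
  unfold genChoose; rw [if_neg (by omega)]

lemma gc_zero (a : ℤ) : genChoose a 0 = 1 := by
  unfold genChoose; rw [if_pos le_rfl]; exact Ring.choose_zero_right a

/-- The target sum `∑_ℓ C(n+r-1, n-ℓ) e_ℓ`. -/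
noncomputable def T (r : ℤ) (n : ℕ) : SymmFn :=
  ∑ l ∈ Finset.range (n + 1),
    ((genChoose ((n : ℤ) + r - 1) ((n : ℤ) - (l : ℤ)) : ℤ) : ℚ) • e l

lemma key1 (r : ℤ) (l : ℕ) (n : ℕ) :
    ∑ k ∈ Finset.range (n + 1), genChoose ((k : ℤ) + r - 1) ((k : ℤ) - l)
      = genChoose ((n : ℤ) + r) ((n : ℤ) - l) := by
  induction n with
  | zero =>
    rw [Finset.sum_range_one]
    rcases Nat.eq_zero_or_pos l with rfl | hl
    · push_cast
      rw [gc_zero, gc_zero]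
    · push_cast
      rw [gc_neg (by omega), gc_neg (by omega)]
  | succ n ih =>
    rw [Finset.sum_range_succ, ih]
    have hp := gc_pascal ((n : ℤ) + r) ((n : ℤ) + 1 - l)
    have h1 : ((n + 1 : ℕ) : ℤ) + r - 1 = (n : ℤ) + r := by push_cast; ring
    have h2 : ((n + 1 : ℕ) : ℤ) - l = (n : ℤ) + 1 - l := by push_cast; ring
    have h3 : ((n + 1 : ℕ) : ℤ) + r = (n : ℤ) + r + 1 := by push_cast; ring
    have h4 : (n : ℤ) + 1 - l - 1 = (n : ℤ) - l := by ring
    rw [h1, h2, h3, hp, h4]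

lemma T_phi (r : ℤ) (n : ℕ) : ∑ k ∈ Finset.range (n + 1), T r k = T (r + 1) n := by
  unfold T
  have hext : ∀ k ∈ Finset.range (n + 1),
      (∑ l ∈ Finset.range (k + 1),
          ((genChoose ((k : ℤ) + r - 1) ((k : ℤ) - (l : ℤ)) : ℤ) : ℚ) • e l)
        = ∑ l ∈ Finset.range (n + 1),
          ((genChoose ((k : ℤ) + r - 1) ((k : ℤ) - (l : ℤ)) : ℤ) : ℚ) • e l := by
    intro k hk
    apply Finset.sum_subset
    · exact Finset.range_subset_range.mpr (by simp at hk; omega)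
    · intro l hl hl'
      simp only [Finset.mem_range] at hl hl'
      rw [gc_neg (by omega)]
      simp
  rw [Finset.sum_congr rfl hext, Finset.sum_comm]
  apply Finset.sum_congr rfl
  intro l _
  rw [← Finset.sum_smul]
  congr 1
  rw [show (n : ℤ) + (r + 1) - 1 = (n : ℤ) + r by ring, ← key1 r l n]
  norm_cast

lemma T_psi (r : ℤ) (n : ℕ) : T r (n + 1) - T r n = T (r - 1) (n + 1) := by
  unfold T
  have hext : (∑ l ∈ Finset.range (n + 1),
        ((genChoose ((n : ℤ) + r - 1) ((n : ℤ) - (l : ℤ)) : ℤ) : ℚ) • e l)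
      = ∑ l ∈ Finset.range (n + 2),
        ((genChoose ((n : ℤ) + r - 1) ((n : ℤ) - (l : ℤ)) : ℤ) : ℚ) • e l := by
    apply Finset.sum_subset (Finset.range_subset_range.mpr (by omega))
    intro l hl hl'
    simp only [Finset.mem_range] at hl hl'
    rw [gc_neg (by omega)]
    simp
  rw [hext, ← Finset.sum_sub_distrib]
  apply Finset.sum_congr rfl
  intro l _
  rw [← sub_smul]
  congr 1
  have e1 : ((n + 1 : ℕ) : ℤ) + r - 1 = (n : ℤ) + r - 1 + 1 := by push_cast; ring
  have e2 : ((n + 1 : ℕ) : ℤ) - (l : ℤ) = (n : ℤ) + 1 - (l : ℤ) := by push_cast; ring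
  have e3 : ((n + 1 : ℕ) : ℤ) + (r - 1) - 1 = (n : ℤ) + r - 1 := by push_cast; ring
  have e4 : (n : ℤ) + 1 - (l : ℤ) - 1 = (n : ℤ) - (l : ℤ) := by ring
  rw [e1, e2, e3, gc_pascal, e4]
  push_cast
  ring

lemma phi_h (n : ℕ) : φ (h n) = ∑ k ∈ Finset.range (n + 1), h k := by
  cases n with
  | zero => rw [Finset.sum_range_one]; show φ 1 = h 0; rw [map_one]; rfl
  | succ n => show φ (MvPolynomial.X n) = _; unfold φ; rw [MvPolynomial.aeval_X]

lemma psi_h (n : ℕ) : ψ (h (n + 1)) = h (n + 1) - h n := by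
  show ψ (MvPolynomial.X n) = _; unfold ψ; rw [MvPolynomial.aeval_X]

lemma iter_sum (f : SymmFn →ₐ[ℚ] SymmFn) {α : Type} (s : Finset α) (g : α → SymmFn) :
    ∀ r : ℕ, (⇑f)^[r] (∑ i ∈ s, g i) = ∑ i ∈ s, (⇑f)^[r] (g i) := by
  intro r
  induction r with
  | zero => simp
  | succ r ih =>
    rw [Function.iterate_succ_apply', ih, map_sum]
    exact Finset.sum_congr rfl fun i _ => (Function.iterate_succ_apply' f r (g i)).symm

lemma iter_sub (f : SymmFn →ₐ[ℚ] SymmFn) (a b : SymmFn) :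
    ∀ r : ℕ, (⇑f)^[r] (a - b) = (⇑f)^[r] a - (⇑f)^[r] b := by
  intro r
  induction r generalizing a b with
  | zero => simp
  | succ r ih => rw [Function.iterate_succ_apply, Function.iterate_succ_apply,
      Function.iterate_succ_apply, map_sub, ih]

lemma iter_zero (f : SymmFn →ₐ[ℚ] SymmFn) (r : ℕ) : (⇑f)^[r] 0 = 0 := by
  induction r with
  | zero => rfl
  | succ r ih => rw [Function.iterate_succ_apply, map_zero, ih]

lemma tau_h (n : ℕ) : τ (h n) = T 0 n := by
  cases n with
  | zero =>
    show τ 1 = _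
    rw [map_one]
    unfold T
    rw [Finset.sum_range_one]
    rw [show ((0 : ℕ) : ℤ) + 0 - 1 = -1 by ring, show ((0 : ℕ) : ℤ) - ((0 : ℕ) : ℤ) = 0 by ring,
      gc_zero]
    rw [e]
    simp
  | succ n =>
    show τ (MvPolynomial.X n) = _
    unfold τ T
    rw [MvPolynomial.aeval_X]
    apply Finset.sum_congr (by norm_num)
    intro l hl
    simp only [Finset.mem_range] at hl
    congr 1
    unfold genChoose
    rw [if_pos (by omega)]
    have h1 : ((n + 1 : ℕ) : ℤ) + 0 - 1 = (n : ℤ) := by push_cast; ring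
    have h2 : (((n + 1 : ℕ) : ℤ) - (l : ℤ)).toNat = n + 1 - l := by omega
    rw [h1, h2, Ring.choose_natCast]
    push_cast
    ring

lemma mainPos (r : ℕ) (n : ℕ) : τ ((⇑φ)^[r] (h n)) = T (r : ℤ) n := by
  induction r generalizing n with
  | zero => simpa using tau_h n
  | succ r ih =>
    rw [Function.iterate_succ_apply, phi_h, iter_sum, map_sum,
      Finset.sum_congr rfl fun k _ => ih k, T_phi]
    norm_cast

lemma mainNeg (r : ℕ) (n : ℕ) : τ ((⇑ψ)^[r] (h n)) = T (-(r : ℤ)) n := by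
  induction r generalizing n with
  | zero => simpa using tau_h n
  | succ r ih =>
    rw [Function.iterate_succ_apply]
    cases n with
    | zero =>
      rw [show ψ (h 0) = h 0 by show ψ 1 = 1; exact map_one ψ, ih]
      unfold T
      rw [Finset.sum_range_one, Finset.sum_range_one,
        show ((0 : ℕ) : ℤ) - ((0 : ℕ) : ℤ) = 0 by ring, gc_zero, gc_zero]
    | succ n =>
      rw [psi_h, iter_sub, map_sub, ih, ih, T_psi]
      congr 1
      omega

lemma main (r : ℤ) (n : ℕ) : τ (φpow r (h n)) = T r n := by
  unfold φpow
  split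
  · rw [mainPos]
    congr 1
    omega
  · rw [mainNeg]
    congr 1
    omega

/-- Entrywise, `τ(φ^{i-j} h_{λ_i - i + j}) = ∑_ℓ C(λ_i - 1, λ_i - i + j - ℓ) e_ℓ`
(`= e_{λ_i-i+j}(1^{λ_i-1}, x)`), and consequently `τ` applied to the Jacobi–Trudi
determinant `det[φ^{i-j} h_{λ_i-i+j}]` yields `det[e_{λ_i-i+j}(1^{λ_i-1}, x)]`.
Indices `i, j` are `0`-indexed (which leaves the differences `i - j`, `λ_i - i + j`
unchanged); binomial coefficients are coefficients of formal expansions of `(1-t)`-powers,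
i.e. generalized binomials. -/
theorem stmt19 (n : ℕ) (lam : Fin n → ℕ) (hlam : Antitone lam) :
    (∀ i j : Fin n,
        τ (φpow ((i : ℤ) - (j : ℤ)) (hInt ((lam i : ℤ) - (i : ℤ) + (j : ℤ)))) =
          ∑ l ∈ Finset.range (lam i + (j : ℕ) + 1),
            ((genChoose ((lam i : ℤ) - 1) ((lam i : ℤ) - (i : ℤ) + (j : ℤ) - (l : ℤ)) : ℤ) : ℚ)
              • e l) ∧
    τ (Matrix.det (Matrix.of fun i j : Fin n =>
          φpow ((i : ℤ) - (j : ℤ)) (hInt ((lam i : ℤ) - (i : ℤ) + (j : ℤ))))) =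
      Matrix.det (Matrix.of fun i j : Fin n =>
        ∑ l ∈ Finset.range (lam i + (j : ℕ) + 1),
          ((genChoose ((lam i : ℤ) - 1) ((lam i : ℤ) - (i : ℤ) + (j : ℤ) - (l : ℤ)) : ℤ) : ℚ)
            • e l) := by
  have hentry : ∀ i j : Fin n,
      τ (φpow ((i : ℤ) - (j : ℤ)) (hInt ((lam i : ℤ) - (i : ℤ) + (j : ℤ)))) =
        ∑ l ∈ Finset.range (lam i + (j : ℕ) + 1),
          ((genChoose ((lam i : ℤ) - 1) ((lam i : ℤ) - (i : ℤ) + (j : ℤ) - (l : ℤ)) : ℤ) : ℚ)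
            • e l := by
    intro i j
    set a : ℕ := lam i with ha
    set m : ℤ := (a : ℤ) - (i : ℤ) + (j : ℤ) with hm
    by_cases hm0 : 0 ≤ m
    · rw [show hInt m = h m.toNat by unfold hInt; rw [if_pos hm0], main, T]
      have hmn : (m.toNat : ℤ) = m := Int.toNat_of_nonneg hm0
      have hsub : Finset.range (m.toNat + 1) ⊆ Finset.range (a + (j : ℕ) + 1) := by
        apply Finset.range_subset_range.mpr
        omega
      rw [Finset.sum_subset hsub]
      · apply Finset.sum_congr rfl
        intro l _
        have e1 : (m.toNat : ℤ) + ((i : ℤ) - (j : ℤ)) - 1 = (a : ℤ) - 1 := by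
          rw [hmn, hm]; ring
        have e2 : (m.toNat : ℤ) - (l : ℤ) = m - (l : ℤ) := by rw [hmn]
        rw [e1, e2]
      · intro l hl hl'
        simp only [Finset.mem_range] at hl hl'
        rw [gc_neg (by omega)]
        simp
    · rw [show hInt m = 0 by unfold hInt; rw [if_neg hm0]]
      rw [show φpow ((i : ℤ) - (j : ℤ)) 0 = 0 by unfold φpow; split <;> exact iter_zero _ _,
        map_zero]
      symm
      apply Finset.sum_eq_zero
      intro l _
      rw [gc_neg (by omega)]
      simp
  refine ⟨hentry, ?_⟩
  rw [AlgHom.map_det]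
  congr 1
  refine Matrix.ext fun i j => ?_
  simpa using hentry i j
end
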